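/- arXiv:1312.4066 — 3 statements merged into one kernel-verified Lean document; each statement's English description precedes it below -/
import Mathlib

section
/- Let w(N) = min{ i | ∀ j ≥ i, π(N)_j = 0 } be the support of the fixed point π(N) of KSPM(p). Then (1/p)·√N − 1 < w(N) < (p+1)·√N + p + 1; in particular w(N) = Θ(√N). -/
def fires (p : ℕ) (b b' : ℕ → ℤ) (i : ℕ) : Prop :=
  (p : ℤ) < b i ∧
  b' i = b i - (p + 1) ∧
  b' (i + p) = b (i + p) + 1 ∧
  (1 ≤ i → b' (i - 1) = b (i - 1) + p) ∧
  ∀ j : ℕ, j ≠ i → j ≠ i + p → (i = 0 ∨ j ≠ i - 1) → b' j = b j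

def kstep (p : ℕ) (b b' : ℕ → ℤ) : Prop := ∃ i, fires p b b' i

def stable (p : ℕ) (b : ℕ → ℤ) : Prop := ∀ i, b i ≤ (p : ℤ)

def initial (N : ℕ) : ℕ → ℤ := fun i => if i = 0 then (N : ℤ) else 0

def KInv (p N : ℕ) (b : ℕ → ℤ) : Prop :=
  (∀ j, 0 ≤ b j) ∧
  (∀ k, (∀ j, k ≤ j → j ≤ k + p → b j = 0) → ∀ j, k ≤ j → b j = 0) ∧
  ∃ M, (∀ j, M ≤ j → b j = 0) ∧ ∑ j ∈ Finset.range M, ((j:ℤ)+1) * b j = N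

lemma sum_ext (b : ℕ → ℤ) (m m' : ℕ) (hm : m ≤ m') (h : ∀ j, m ≤ j → b j = 0) :
    ∑ j ∈ Finset.range m', ((j:ℤ)+1) * b j = ∑ j ∈ Finset.range m, ((j:ℤ)+1) * b j := by
  refine (Finset.sum_subset (Finset.range_subset_range.2 hm) ?_).symm
  intro x _ hnx
  rw [h x (by simpa using hnx)]
  ring

lemma inv_initial (p N : ℕ) : KInv p N (initial N) := by
  refine ⟨?_, ?_, 1, ?_, ?_⟩
  · intro j; unfold initial; split <;> simp
  · intro k hk j hj
    rcases Nat.eq_zero_or_pos j with rfl | hj0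
    · have hk0 : k = 0 := Nat.le_zero.mp hj
      subst hk0; exact hk 0 le_rfl (Nat.zero_le _)
    · unfold initial; simp [hj0.ne']
  · intro j hj; unfold initial; simp [(Nat.lt_of_lt_of_le Nat.zero_lt_one hj).ne']
  · simp [initial]

lemma inv_step (p N : ℕ) (hp : 0 < p) (b b' : ℕ → ℤ) (hb : KInv p N b)
    (hs : kstep p b b') : KInv p N b' := by
  obtain ⟨i, hi, h1, h2, h3, h4⟩ := hs
  obtain ⟨hnn, hgap, M, hM, hsum⟩ := hb
  have hpz : (0:ℤ) < p := by exact_mod_cast hp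
  -- values of b'
  have hval : ∀ j, b' j = b j ∨ (j = i ∧ b' j = b j - (p+1)) ∨
      (j = i + p ∧ b' j = b j + 1) ∨ (1 ≤ i ∧ j = i - 1 ∧ b' j = b j + p) := by
    intro j
    by_cases hji : j = i
    · subst hji; right; left; exact ⟨rfl, h1⟩
    · by_cases hjp : j = i + p
      · subst hjp; right; right; left; exact ⟨rfl, h2⟩
      · rcases Nat.eq_zero_or_pos i with hi0 | hi1
        · left; exact h4 j hji hjp (Or.inl hi0)
        · by_cases hjm : j = i - 1
          · subst hjm; right; right; right; exact ⟨hi1, rfl, h3 hi1⟩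
          · left; exact h4 j hji hjp (Or.inr hjm)
  have hnn' : ∀ j, 0 ≤ b' j := by
    intro j
    rcases hval j with h | ⟨rfl, h⟩ | ⟨rfl, h⟩ | ⟨_, rfl, h⟩ <;> rw [h]
    · exact hnn j
    · omega
    · linarith [hnn (i+p)]
    · linarith [hnn (i-1)]
  refine ⟨hnn', ?_, ?_⟩
  · -- gap property
    intro k H
    have hik : i + p < k := by
      by_contra hge
      push_neg at hge
      rcases lt_or_ge i k with hik2 | hki
      · have h0 := H (i+p) hge (by omega)
        rw [h2] at h0; linarith [hnn (i+p)]
      · rcases Nat.eq_or_lt_of_le hki with heq | hki2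
        · have h0 := H (i+p) (by omega) (by omega)
          rw [h2] at h0; linarith [hnn (i+p)]
        · rcases le_or_gt i (k+p+1) with hle | hgt
          · have h3' := h3 (by omega)
            have h0 := H (i-1) (by omega) (by omega)
            rw [h3'] at h0; linarith [hnn (i-1)]
          · have hbz : ∀ j, k ≤ j → j ≤ k + p → b j = 0 := by
              intro j hj1 hj2
              have he := h4 j (by omega) (by omega) (Or.inr (by omega))
              rw [← he]; exact H j hj1 hj2
            have h0 := hgap k hbz i (by omega)
            omega
    have heqk : ∀ j, k ≤ j → b' j = b j := by
      intro j hj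
      refine h4 j (by omega) (by omega) ?_
      rcases Nat.eq_zero_or_pos i with hi0 | hi1
      · exact Or.inl hi0
      · exact Or.inr (by omega)
    have hbz : ∀ j, k ≤ j → j ≤ k + p → b j = 0 := by
      intro j hj1 hj2
      rw [← heqk j hj1]; exact H j hj1 hj2
    intro j hj
    rw [heqk j hj]
    exact hgap k hbz j hj
  · -- weight
    refine ⟨max M (i+p+1), ?_, ?_⟩
    · intro j hj
      rw [h4 j (by omega) (by omega) ?_]
      · exact hM j (by omega)
      · rcases Nat.eq_zero_or_pos i with hi0 | hi1
        · exact Or.inl hi0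
        · exact Or.inr (by omega)
    · set M' := max M (i+p+1) with hMdef
      have e1 : ∑ j ∈ Finset.range M', ((j:ℤ)+1) * b j = N := by
        rw [sum_ext b M M' (le_max_left _ _) hM, hsum]
      have e2 : ∑ j ∈ Finset.range M', ((j:ℤ)+1) * b' j
          = ∑ j ∈ Finset.range M', ((j:ℤ)+1) * b j
          + ∑ j ∈ Finset.range M', ((j:ℤ)+1) * (b' j - b j) := by
        rw [← Finset.sum_add_distrib]
        exact Finset.sum_congr rfl (fun j _ => by ring)
      have hsub : ({i-1, i, i+p} : Finset ℕ) ⊆ Finset.range M' := by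
        intro x hx
        simp only [Finset.mem_insert, Finset.mem_singleton] at hx
        simp only [Finset.mem_range]
        omega
      have e3 : ∑ j ∈ Finset.range M', ((j:ℤ)+1) * (b' j - b j)
          = ∑ j ∈ ({i-1, i, i+p} : Finset ℕ), ((j:ℤ)+1) * (b' j - b j) := by
        refine (Finset.sum_subset hsub ?_).symm
        intro x _ hx
        simp only [Finset.mem_insert, Finset.mem_singleton, not_or] at hx
        obtain ⟨hx1, hx2, hx3⟩ := hx
        rw [h4 x hx2 hx3 (Or.inr hx1)]
        ring
      have e4 : ∑ j ∈ ({i-1, i, i+p} : Finset ℕ), ((j:ℤ)+1) * (b' j - b j) = 0 := by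
        rcases Nat.eq_zero_or_pos i with hi0 | hi1
        · subst hi0
          have hs : ({0-1, 0, 0+p} : Finset ℕ) = {0, p} := by
            norm_num
          rw [hs, Finset.sum_insert (by simp; omega), Finset.sum_singleton]
          rw [h1]
          rw [show (0:ℕ)+p = p from by omega] at h2
          rw [h2]
          push_cast
          ring
        · have hne1 : (i-1) ∉ ({i, i+p} : Finset ℕ) := by
            simp only [Finset.mem_insert, Finset.mem_singleton]; omega
          have hne2 : i ∉ ({i+p} : Finset ℕ) := by
            simp only [Finset.mem_singleton]; omega
          rw [Finset.sum_insert hne1, Finset.sum_insert hne2, Finset.sum_singleton]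
          rw [h1, h2, h3 hi1]
          have hc : ((i-1 : ℕ) : ℤ) = (i:ℤ) - 1 := by omega
          rw [hc]
          push_cast
          ring
      rw [e2, e3, e4, add_zero, e1]

lemma inv_reach (p N : ℕ) (hp : 0 < p) (σ : ℕ → ℤ)
    (h : Relation.ReflTransGen (kstep p) (initial N) σ) : KInv p N σ := by
  induction h with
  | refl => exact inv_initial p N
  | tail _ hstep ih => exact inv_step p N hp _ _ ih hstep



/-- The support `w(N) = min { i | ∀ j ≥ i, π(N)_j = 0 }` of the fixed point
`π(N)` of KSPM(p) satisfies `(1/p)·√N − 1 < w(N) < (p+1)·√N + p + 1`;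
in particular it is in `Θ(√N)`. -/
theorem support_theta_sqrt (p N : ℕ) (hp : 0 < p) (σ : ℕ → ℤ)
    (hreach : Relation.ReflTransGen (kstep p) (initial N) σ)
    (hstable : stable p σ)
    (w : ℕ) (hw : w = sInf { i : ℕ | ∀ j, i ≤ j → σ j = 0 }) :
    Real.sqrt N / p - 1 < (w : ℝ) ∧ (w : ℝ) < (p + 1) * Real.sqrt N + p + 1 := by
  obtain ⟨hnn, hgap, M, hM, hsum⟩ := inv_reach p N hp σ hreach
  have hwS : w ∈ { i : ℕ | ∀ j, i ≤ j → σ j = 0 } := by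
    rw [hw]; exact Nat.sInf_mem ⟨M, hM⟩
  have hσw : ∀ j, w ≤ j → σ j = 0 := hwS
  have hNw : ∑ j ∈ Finset.range w, ((j:ℤ)+1) * σ j = N := by
    rcases le_total w M with h | h
    · rw [← sum_ext σ w M h hσw]; exact hsum
    · rw [sum_ext σ M w h hM]; exact hsum
  have hpR : (0:ℝ) < p := by exact_mod_cast hp
  constructor
  · -- upper bound on N: N ≤ p * w * w
    have hub : (N:ℤ) ≤ (p:ℤ) * w * w := by
      calc (N:ℤ) = ∑ j ∈ Finset.range w, ((j:ℤ)+1) * σ j := hNw.symm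
        _ ≤ ∑ _j ∈ Finset.range w, ((w:ℤ) * p) := by
            refine Finset.sum_le_sum ?_
            intro j hj
            simp only [Finset.mem_range] at hj
            have h1 : ((j:ℤ)+1) ≤ w := by exact_mod_cast hj
            have h2 : σ j ≤ p := hstable j
            have h3 : (0:ℤ) ≤ σ j := hnn j
            have h4 : (0:ℤ) ≤ (j:ℤ)+1 := by positivity
            calc ((j:ℤ)+1) * σ j ≤ (w:ℤ) * σ j := by
                  exact mul_le_mul_of_nonneg_right h1 h3
              _ ≤ (w:ℤ) * p := by
                  refine mul_le_mul_of_nonneg_left h2 ?_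
                  exact_mod_cast Nat.zero_le w
        _ = (w:ℤ) * ((w:ℤ) * p) := by
            rw [Finset.sum_const, Finset.card_range]; simp [mul_comm]
        _ = (p:ℤ) * w * w := by ring
    have hubR : (N:ℝ) < ((p:ℝ) * (w + 1))^2 := by
      have hh : (N:ℝ) ≤ (p:ℝ) * w * w := by exact_mod_cast hub
      have hwR : (0:ℝ) ≤ (w:ℝ) := Nat.cast_nonneg w
      have hp1R : (1:ℝ) ≤ (p:ℝ) := by exact_mod_cast hp
      have key1 : (p:ℝ) * w * w < (p:ℝ) * ((w+1) * (w+1)) := by nlinarith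
      have key2 : (p:ℝ) * ((w+1) * (w+1)) ≤ ((p:ℝ) * (w+1))^2 := by nlinarith
      linarith
    have hsq : Real.sqrt N < (p:ℝ) * (w + 1) := by
      rw [show ((p:ℝ) * (w+1))^2 = ((p:ℝ)*(w+1))^2 from rfl] at hubR
      have hpos : (0:ℝ) < (p:ℝ) * (w + 1) := by positivity
      exact (Real.sqrt_lt' hpos).mpr hubR
    rw [div_sub_one hpR.ne', div_lt_iff₀ hpR]
    linarith
  · -- lower bound
    rcases Nat.eq_zero_or_pos w with rfl | hw1
    · have : (0:ℝ) ≤ Real.sqrt N := Real.sqrt_nonneg _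
      push_cast
      nlinarith
    · obtain ⟨T, hT⟩ : ∃ T, T = (w-1)/(p+1) + 1 := ⟨_, rfl⟩
      have hpp : 0 < p + 1 := Nat.succ_pos p
      have hTpos : 0 < T := hT ▸ Nat.succ_pos _
      have hwT : w ≤ T * (p+1) := by
        have h1 : (w-1)/(p+1) < T := hT ▸ Nat.lt_succ_self _
        have h2 : w - 1 < T * (p+1) := (Nat.div_lt_iff_lt_mul hpp).mp h1
        omega
      have hlt : ∀ t, t < T → t*(p+1) ≤ w - 1 := by
        intro t ht
        have h1 : t ≤ (w-1)/(p+1) := by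
          rw [hT] at ht
          exact Nat.lt_succ_iff.mp ht
        exact (Nat.le_div_iff_mul_le hpp).mp h1
      -- in each window a nonzero slope
      have hwin : ∀ t, t < T → ∃ j, w - 1 - t*(p+1) ≤ j ∧ j ≤ w - 1 - t*(p+1) + p ∧ 1 ≤ σ j := by
        intro t ht
        by_contra hcon
        push_neg at hcon
        have hz : ∀ j, w - 1 - t*(p+1) ≤ j → j ≤ w - 1 - t*(p+1) + p → σ j = 0 := by
          intro j h1 h2
          have := hcon j h1 h2
          have := hnn j
          omega
        have hmem : (w - 1 - t*(p+1)) ∈ { i : ℕ | ∀ j, i ≤ j → σ j = 0 } :=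
          hgap _ hz
        have hle : w ≤ w - 1 - t*(p+1) := by
          have h5 := Nat.sInf_le hmem
          rw [← hw] at h5
          exact h5
        have : w - 1 - t*(p+1) ≤ w - 1 := Nat.sub_le _ _
        omega
      -- partial sums
      set g : ℕ → ℤ := fun m => ∑ j ∈ Finset.range m, ((j:ℤ)+1) * σ j with hg
      have hgnn : ∀ m, 0 ≤ g m := by
        intro m
        refine Finset.sum_nonneg ?_
        intro j _
        have := hnn j
        positivity
      have hblock : ∀ t, t < T →
          ((w:ℤ) - t*(p+1)) + g (w - 1 - t*(p+1)) ≤ g (w - 1 - t*(p+1) + p + 1) := by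
        intro t ht
        obtain ⟨j, hj1, hj2, hj3⟩ := hwin t ht
        have hsplit : g (w - 1 - t*(p+1)) + ∑ j ∈ Finset.Ico (w - 1 - t*(p+1)) (w - 1 - t*(p+1) + p + 1), ((j:ℤ)+1) * σ j = g (w - 1 - t*(p+1) + p + 1) := by
          rw [hg]
          simp only [Finset.range_eq_Ico]
          exact Finset.sum_Ico_consecutive _ (Nat.zero_le _) (by omega)
        have hterm : ((w:ℤ) - t*(p+1)) ≤ ∑ j ∈ Finset.Ico (w - 1 - t*(p+1)) (w - 1 - t*(p+1) + p + 1), ((j:ℤ)+1) * σ j := by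
          have hjmem : j ∈ Finset.Ico (w - 1 - t*(p+1)) (w - 1 - t*(p+1) + p + 1) := by
            simp only [Finset.mem_Ico]
            omega
          have h1 : ((w:ℤ) - t*(p+1)) ≤ ((j:ℤ)+1) * σ j := by
            have ht2 : t*(p+1) ≤ w - 1 := hlt t ht
            have hc : ((w:ℤ) - t*(p+1)) ≤ (j:ℤ) + 1 := by
              have : w - 1 - t*(p+1) ≤ j := hj1
              have hcast : ((t*(p+1) : ℕ) : ℤ) = (t:ℤ)*(p+1) := by push_cast; ring
              omega
            calc ((w:ℤ) - t*(p+1)) ≤ ((j:ℤ)+1) * 1 := by linarith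
              _ ≤ ((j:ℤ)+1) * σ j := by
                  refine mul_le_mul_of_nonneg_left hj3 ?_
                  positivity
          refine le_trans h1 ?_
          refine Finset.single_le_sum (f := fun j : ℕ => ((j:ℤ)+1) * σ j) ?_ hjmem
          intro x _
          have := hnn x
          positivity
        linarith
      have hmain : ∀ t, t ≤ T →
          (∑ s ∈ Finset.range t, ((w:ℤ) - s*(p+1))) + g (w + p - t*(p+1)) ≤ (N:ℤ) := by
        intro t
        induction t with
        | zero =>
            intro _
            have hgwp : g (w + p) = (N:ℤ) := by
              show (∑ j ∈ Finset.range (w+p), ((j:ℤ)+1) * σ j) = (N:ℤ)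
              rw [sum_ext σ w (w+p) (by omega) hσw]
              exact hNw
            simp only [Finset.sum_range_zero, zero_add, Nat.zero_mul, Nat.sub_zero]
            rw [hgwp]
        | succ t ih =>
            intro ht
            have ht' : t < T := ht
            have ht2 : t*(p+1) ≤ w - 1 := hlt t ht'
            have e1 : w + p - t*(p+1) = w - 1 - t*(p+1) + p + 1 := by omega
            have e2 : w + p - (t+1)*(p+1) = w - 1 - t*(p+1) := by
              have : (t+1)*(p+1) = t*(p+1) + (p+1) := by ring
              omega
            have hihe := ih (le_of_lt ht')
            rw [e1] at hihe
            rw [Finset.sum_range_succ, e2]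
            have hb := hblock t ht'
            linarith
      -- conclude N ≥ T^2
      have hgauss : ∀ n : ℕ, 2 * ∑ s ∈ Finset.range n, (s:ℤ) = (n:ℤ) * ((n:ℤ) - 1) := by
        intro n
        induction n with
        | zero => simp
        | succ n ih =>
            rw [Finset.sum_range_succ, mul_add]
            rw [ih]
            push_cast
            ring
      have hT1 : (1:ℤ) ≤ (T:ℤ) := by exact_mod_cast hTpos
      have hp1 : (1:ℤ) ≤ (p:ℤ) := by exact_mod_cast hp
      have hwlb : ((T:ℤ) - 1)*((p:ℤ)+1) + 1 ≤ (w:ℤ) := by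
        have h3 : (T-1)*(p+1) ≤ w - 1 := hlt (T-1) (by omega)
        have hc : (((T-1)*(p+1) : ℕ) : ℤ) = ((T:ℤ)-1)*((p:ℤ)+1) := by
          push_cast [Nat.cast_sub (by omega : 1 ≤ T)]
          ring
        omega
      have hsumform : 2 * (∑ s ∈ Finset.range T, ((w:ℤ) - (s:ℤ)*((p:ℤ)+1)))
          = 2 * (T:ℤ) * (w:ℤ) - ((p:ℤ)+1) * ((T:ℤ) * ((T:ℤ)-1)) := by
        rw [Finset.sum_sub_distrib, Finset.sum_const, Finset.card_range]
        rw [← Finset.sum_mul]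
        rw [← hgauss T]
        push_cast
        ring
      have hTN : ((T:ℤ))^2 ≤ (N:ℤ) := by
        have h1 := hmain T le_rfl
        have h2 : (∑ s ∈ Finset.range T, ((w:ℤ) - (s:ℤ)*((p:ℤ)+1))) ≤ (N:ℤ) := by
          have h4 := hgnn (w + p - T*(p+1))
          have h5 : (∑ s ∈ Finset.range T, ((w:ℤ) - (s:ℤ)*((p:ℤ)+1)))
              = (∑ s ∈ Finset.range T, ((w:ℤ) - (s:ℤ)*((p:ℤ)+1))) := rfl
          linarith [h1]
        have hmul1 : 2 * (T:ℤ) * ((((T:ℤ)-1)*((p:ℤ)+1)) + 1) ≤ 2 * (T:ℤ) * (w:ℤ) := by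
          refine mul_le_mul_of_nonneg_left hwlb ?_
          linarith
        have hmul2 : 2 * ((T:ℤ) * ((T:ℤ)-1)) ≤ ((p:ℤ)+1) * ((T:ℤ) * ((T:ℤ)-1)) := by
          refine mul_le_mul_of_nonneg_right (by linarith) ?_
          nlinarith
        nlinarith [h2, hsumform, hmul1, hmul2]
      have hsqrt : (T:ℝ) ≤ Real.sqrt N := by
        have h1 : ((T:ℝ))^2 ≤ (N:ℝ) := by exact_mod_cast hTN
        have h2 := Real.sqrt_le_sqrt h1
        rwa [Real.sqrt_sq (by positivity : (0:ℝ) ≤ (T:ℝ))] at h2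
      have hwTR : (w:ℝ) ≤ (T:ℝ) * ((p:ℝ)+1) := by
        have h1 : (w:ℝ) ≤ ((T * (p+1) : ℕ) : ℝ) := by exact_mod_cast hwT
        push_cast at h1
        linarith
      have h2 : (T:ℝ) * ((p:ℝ)+1) ≤ Real.sqrt N * ((p:ℝ)+1) := by
        refine mul_le_mul_of_nonneg_right hsqrt ?_
        positivity
      push_cast
      nlinarith [hpR]
end

section
/- Let M be the p×p averaging matrix (companion matrix with last row all 1/p) and D = I − (1/p)·J where J is the all-ones p×p matrix. Then the set of eigenvalues of O = D·M is {0} ∪ {λ_1, ..., λ_{p-1}}, where λ_1, ..., λ_{p-1} are the roots of R(x) = Σ_{k=0}^{p-1} ((k+1)/p)·x^k; in particular the spectral radius of O is at most (p−1)/p < 1. -/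
/-!
For `x ≠ 0`, an eigenvector `v` of `D·M` for `x` has mean zero, so `M v = x v + μ 𝟙`; reading
`M` as the shift of the recurrence `g (k + p) = mean (g k, …, g (k + p - 1))`, this says
`v (k + 1) = x v k + μ` for `k < p` with `v p = 0`. The vector of geometric tails
`t k = ∑_{k ≤ j < p} x ^ j` solves this recurrence with `μ = -x ^ p`, so `x ^ p v = -μ t`, and
`∑ k, t k = ∑ k, (k + 1) x ^ k = p R(x)`. Hence `v` exists iff `R(x) = 0`. The eigenvalue `0`
comes from `M 𝟙 = 𝟙` and `D 𝟙 = 0`. The bound on the roots is the Eneström–Kakeya theorem: the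
coefficients `a k = (k + 1) / p` of `R` satisfy `a k ≤ (p - 1) / p * a (k + 1)`.
-/

open Polynomial

/-- `R(x) = Σ_{k<p} ((k+1)/p)·x^k` over `ℂ`. -/
noncomputable def RpolyC (p : ℕ) : Polynomial ℂ :=
  ∑ k ∈ Finset.range p, C (((k : ℂ) + 1) / p) * X ^ k

/-- The `p×p` averaging matrix over `ℂ`. -/
noncomputable def MmatC (p : ℕ) : Matrix (Fin p) (Fin p) ℂ :=
  Matrix.of fun i j =>
    if (i : ℕ) + 1 < p then (if (j : ℕ) = (i : ℕ) + 1 then 1 else 0)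
    else 1 / p

/-- `D = I - (1/p)·J`, the projection onto the mean-zero hyperplane. -/
noncomputable def DmatC (p : ℕ) : Matrix (Fin p) (Fin p) ℂ :=
  1 - ((p : ℂ))⁻¹ • Matrix.of (fun _ _ => (1 : ℂ))

open Finset Matrix

theorem Matrix.mem_spectrum_iff_exists_mulVec_eq_smul {K n : Type*} [Field K] [Fintype n]
    [DecidableEq n] (A : Matrix n n K) (μ : K) :
    μ ∈ spectrum K A ↔ ∃ v ≠ 0, A *ᵥ v = μ • v := by
  rw [← spectrum_toLin', ← Module.End.hasEigenvalue_iff_mem_spectrum]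
  constructor
  · intro h
    obtain ⟨v, hv⟩ := h.exists_hasEigenvector
    exact ⟨v, hv.2, by simpa using hv.apply_eq_smul⟩
  · rintro ⟨v, hv, hAv⟩
    refine Module.End.hasEigenvalue_of_hasEigenvector ⟨?_, hv⟩
    simpa [Module.End.mem_eigenspace_iff] using hAv

theorem one_sub_mul_sum_range_succ {R : Type*} [CommRing R] (a : ℕ → R) (z : R) (n : ℕ) :
    (1 - z) * ∑ k ∈ range (n + 1), a k * z ^ k
      = a 0 + ∑ k ∈ range n, (a (k + 1) - a k) * z ^ (k + 1) - a n * z ^ (n + 1) := by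
  induction n with
  | zero => simp [sub_mul, mul_comm]
  | succ n ih => rw [sum_range_succ, mul_add, ih, sum_range_succ]; ring

theorem norm_le_one_of_sum_eq_zero_of_le_succ {n : ℕ} {a : ℕ → ℝ} (ha₀ : 0 < a 0)
    (ha : ∀ k < n, a k ≤ a (k + 1)) {z : ℂ}
    (hz : ∑ k ∈ range (n + 1), (a k : ℂ) * z ^ k = 0) : ‖z‖ ≤ 1 := by
  by_contra! hr
  have hinc : ∀ k ∈ range n, 0 ≤ a (k + 1) - a k := fun k hk ↦ sub_nonneg.2 (ha k (mem_range.1 hk))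
  have htel : a 0 + ∑ k ∈ range n, (a (k + 1) - a k) = a n := by
    rw [sum_range_sub]; ring
  have han : 0 < a n := htel ▸ add_pos_of_pos_of_nonneg ha₀ (sum_nonneg hinc)
  have hlead := one_sub_mul_sum_range_succ (fun k ↦ (a k : ℂ)) z n
  rw [hz, mul_zero, eq_comm, sub_eq_zero] at hlead
  have : a n * ‖z‖ ^ (n + 1) ≤ a n * ‖z‖ ^ n :=
    calc a n * ‖z‖ ^ (n + 1) = ‖(a n : ℂ) * z ^ (n + 1)‖ := by
          simp [norm_pow, abs_of_pos han]
      _ ≤ a 0 + ∑ k ∈ range n, (a (k + 1) - a k) * ‖z‖ ^ (k + 1) := by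
          rw [← hlead]
          refine (norm_add_le _ _).trans (add_le_add ?_ ((norm_sum_le _ _).trans ?_))
          · simp [abs_of_pos ha₀]
          · refine sum_le_sum fun k hk ↦ ?_
            rw [norm_mul, norm_pow, ← Complex.ofReal_sub, Complex.norm_real, Real.norm_eq_abs,
              abs_of_nonneg (hinc k hk)]
      _ ≤ a 0 * ‖z‖ ^ n + ∑ k ∈ range n, (a (k + 1) - a k) * ‖z‖ ^ n := by
          refine add_le_add (le_mul_of_one_le_right ha₀.le (one_le_pow₀ hr.le))
            (sum_le_sum fun k hk ↦ ?_)
          exact mul_le_mul_of_nonneg_left (pow_le_pow_right₀ hr.le (mem_range.1 hk)) (hinc k hk)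
      _ = a n * ‖z‖ ^ n := by rw [← sum_mul, ← add_mul, htel]
  exact this.not_gt (mul_lt_mul_of_pos_left (pow_lt_pow_right₀ hr n.lt_succ_self) han)

theorem norm_le_of_sum_eq_zero_of_le_mul_succ {n : ℕ} {a : ℕ → ℝ} {β : ℝ} (hβ : 0 < β)
    (ha₀ : 0 < a 0) (ha : ∀ k < n, a k ≤ β * a (k + 1)) {z : ℂ}
    (hz : ∑ k ∈ range (n + 1), (a k : ℂ) * z ^ k = 0) : ‖z‖ ≤ β := by
  have hβ' : (β : ℂ) ≠ 0 := Complex.ofReal_ne_zero.2 hβ.ne'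
  have hscaled : ‖z / β‖ ≤ 1 := by
    refine norm_le_one_of_sum_eq_zero_of_le_succ (n := n) (a := fun k ↦ a k * β ^ k)
      (by simpa using ha₀) (fun k hk ↦ ?_) ?_
    · rw [pow_succ, ← mul_assoc, mul_right_comm]
      exact mul_le_mul_of_nonneg_right (by linarith [ha k hk]) (pow_pos hβ k).le
    · rw [← hz]
      refine sum_congr rfl fun k _ ↦ ?_
      rw [div_pow]
      push_cast
      field_simp
  rwa [norm_div, Complex.norm_real, Real.norm_eq_abs, abs_of_pos hβ, div_le_one hβ] at hscaled

def geomTail {R : Type*} [CommSemiring R] (x : R) (k p : ℕ) : R :=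
  ∑ j ∈ Ico k p, x ^ j

section geomTail

variable {R : Type*} [CommRing R] (x : R) {k p : ℕ}

theorem geomTail_self : geomTail x p p = 0 := by simp [geomTail]

theorem geomTail_succ (hk : k < p) : geomTail x (k + 1) p = x * geomTail x k p - x ^ p := by
  rw [geomTail, geomTail, eq_sub_iff_add_eq, ← sum_Ico_succ_top hk (fun j ↦ x ^ j), mul_sum,
    Nat.succ_eq_add_one, ← sum_Ico_add' (fun j ↦ x ^ j)]
  simp_rw [pow_succ']

theorem sum_range_geomTail :
    ∑ k ∈ range p, geomTail x k p = ∑ j ∈ range p, ((j : R) + 1) * x ^ j := by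
  rw [range_eq_Ico]
  unfold geomTail
  rw [sum_Ico_Ico_comm]
  simp [mul_comm]

theorem geomTail_pred (hp : 0 < p) : geomTail x (p - 1) p = x ^ (p - 1) := by
  simp [geomTail, Nat.Ico_pred_singleton hp]

end geomTail

theorem pow_mul_eq_neg_mul_geomTail {K : Type*} [CommRing K] [IsDomain K] {x μ : K} {p : ℕ}
    {f : ℕ → K} (hx : x ≠ 0) (hf : ∀ k < p, f (k + 1) = x * f k + μ) (hfp : f p = 0) {k : ℕ}
    (hk : k ≤ p) :
    x ^ p * f k = -μ * geomTail x k p := by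
  refine Nat.decreasingInduction (motive := fun k _ ↦ x ^ p * f k = -μ * geomTail x k p)
    (fun k hk ih ↦ ?_) (by simp [hfp, geomTail_self]) hk
  rw [hf k hk, geomTail_succ x hk] at ih
  refine mul_left_cancel₀ hx ?_
  linear_combination ih

section averaging

variable {p : ℕ}

theorem DmatC_mulVec_apply (v : Fin p → ℂ) (i : Fin p) :
    (DmatC p *ᵥ v) i = v i - (∑ j, v j) / p := by
  simp only [DmatC, sub_mulVec, one_mulVec, smul_mulVec, Pi.sub_apply, Pi.smul_apply, smul_eq_mul]
  simp [mulVec, dotProduct, div_eq_inv_mul]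

theorem sum_DmatC_mulVec (hp : p ≠ 0) (v : Fin p → ℂ) : ∑ i, (DmatC p *ᵥ v) i = 0 := by
  have hp' : (p : ℂ) ≠ 0 := Nat.cast_ne_zero.2 hp
  simp [DmatC_mulVec_apply, sum_sub_distrib, mul_div_cancel₀ _ hp']

theorem MmatC_mulVec_apply (g : ℕ → ℂ) (hg : g p = (∑ k ∈ range p, g k) / p) (i : Fin p) :
    (MmatC p *ᵥ fun j ↦ g j) i = g (i + 1) := by
  by_cases h : (i : ℕ) + 1 < p
  · simp only [mulVec, dotProduct, MmatC, of_apply, h, ↓reduceIte, ite_mul, one_mul, zero_mul]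
    rw [sum_eq_single ⟨(i : ℕ) + 1, h⟩ (fun j _ hj ↦ if_neg fun e ↦ hj (Fin.ext e)) (by simp)]
    simp
  · have : (i : ℕ) + 1 = p := by omega
    simp [MmatC, mulVec, dotProduct, this, hg, div_eq_inv_mul, mul_sum,
      Fin.sum_univ_eq_sum_range (fun k ↦ (p : ℂ)⁻¹ * g k)]

theorem eval_RpolyC (x : ℂ) :
    (RpolyC p).eval x = ∑ k ∈ range p, ((k : ℂ) + 1) / p * x ^ k := by
  simp [RpolyC, eval_finsetSum]

theorem sum_range_geomTail_eq_mul_eval_RpolyC (hp : p ≠ 0) (x : ℂ) :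
    ∑ k ∈ range p, geomTail x k p = p * (RpolyC p).eval x := by
  have hp' : (p : ℂ) ≠ 0 := Nat.cast_ne_zero.2 hp
  rw [sum_range_geomTail, eval_RpolyC, mul_sum]
  exact sum_congr rfl fun k _ ↦ by field_simp

theorem zero_mem_spectrum_DmatC_mul_MmatC (hp : p ≠ 0) :
    (0 : ℂ) ∈ spectrum ℂ (DmatC p * MmatC p) := by
  have hp' : (p : ℂ) ≠ 0 := Nat.cast_ne_zero.2 hp
  refine (mem_spectrum_iff_exists_mulVec_eq_smul _ _).2 ⟨fun _ ↦ 1, ?_, ?_⟩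
  · exact Function.ne_iff.2 ⟨⟨0, Nat.pos_of_ne_zero hp⟩, one_ne_zero⟩
  · have hM : MmatC p *ᵥ (fun _ ↦ 1) = fun _ ↦ 1 := by
      ext i
      exact MmatC_mulVec_apply (fun _ ↦ 1) (by simp [hp']) i
    ext i
    simp [← mulVec_mulVec, hM, DmatC_mulVec_apply, hp']

theorem mulVec_geomTail_eq_smul (hp : p ≠ 0) {x : ℂ} (hx : (RpolyC p).IsRoot x) :
    (DmatC p * MmatC p) *ᵥ (fun i : Fin p ↦ geomTail x i p) =
      x • fun i : Fin p ↦ geomTail x i p := by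
  have hp' : (p : ℂ) ≠ 0 := Nat.cast_ne_zero.2 hp
  have hsum : ∑ k ∈ range p, geomTail x k p = 0 := by
    rw [sum_range_geomTail_eq_mul_eval_RpolyC hp, hx.eq_zero, mul_zero]
  have hM : MmatC p *ᵥ (fun i : Fin p ↦ geomTail x i p) =
      fun i : Fin p ↦ x * geomTail x i p - x ^ p := by
    ext i
    rw [MmatC_mulVec_apply (fun k ↦ geomTail x k p) (by rw [geomTail_self, hsum, zero_div]),
      geomTail_succ x i.2]
  ext i
  rw [← mulVec_mulVec, hM, DmatC_mulVec_apply]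
  simp only [sum_sub_distrib, ← mul_sum, Fin.sum_univ_eq_sum_range (fun k ↦ geomTail x k p), hsum,
    mul_zero, sum_const, card_univ, Fintype.card_fin, nsmul_eq_mul, zero_sub, Pi.smul_apply,
    smul_eq_mul]
  rw [neg_div, mul_div_cancel_left₀ _ hp']
  ring

theorem sum_range_eq_zero_of_mulVec_eq_smul (hp : p ≠ 0) {x : ℂ} (hx : x ≠ 0) {v : Fin p → ℂ}
    (h : (DmatC p * MmatC p) *ᵥ v = x • v) {f : ℕ → ℂ} (hfv : ∀ i : Fin p, f i = v i) :
    ∑ k ∈ range p, f k = 0 := by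
  have := sum_DmatC_mulVec hp (MmatC p *ᵥ v)
  rw [mulVec_mulVec, h] at this
  rw [← Fin.sum_univ_eq_sum_range f]
  simpa [hfv, ← mul_sum, hx] using this

theorem exists_succ_eq_mul_add_of_mulVec_eq_smul (hp : p ≠ 0) {x : ℂ} (hx : x ≠ 0)
    {v : Fin p → ℂ} (h : (DmatC p * MmatC p) *ᵥ v = x • v) {f : ℕ → ℂ}
    (hfv : ∀ i : Fin p, f i = v i) (hfp : f p = 0) :
    ∃ μ, ∀ k < p, f (k + 1) = x * f k + μ := by
  have hfsum := sum_range_eq_zero_of_mulVec_eq_smul hp hx h hfv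
  refine ⟨(∑ j, (MmatC p *ᵥ v) j) / p, fun k hk ↦ ?_⟩
  have hM := MmatC_mulVec_apply f (by rw [hfp, hfsum, zero_div]) ⟨k, hk⟩
  have hD := congrFun h ⟨k, hk⟩
  rw [← mulVec_mulVec, DmatC_mulVec_apply, Pi.smul_apply, smul_eq_mul] at hD
  rw [funext hfv] at hM
  rw [← hM, show f k = v ⟨k, hk⟩ from hfv ⟨k, hk⟩]
  linear_combination hD

theorem isRoot_RpolyC_of_mulVec_eq_smul (hp : p ≠ 0) {x : ℂ} (hx : x ≠ 0) {v : Fin p → ℂ}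
    (hv : v ≠ 0) (h : (DmatC p * MmatC p) *ᵥ v = x • v) : (RpolyC p).IsRoot x := by
  have hp' : (p : ℂ) ≠ 0 := Nat.cast_ne_zero.2 hp
  set f : ℕ → ℂ := fun k ↦ if hk : k < p then v ⟨k, hk⟩ else 0
  have hfv : ∀ i : Fin p, f i = v i := fun i ↦ dif_pos i.2
  have hfp : f p = 0 := dif_neg (lt_irrefl p)
  obtain ⟨μ, hf⟩ := exists_succ_eq_mul_add_of_mulVec_eq_smul hp hx h hfv hfp
  have htail {k : ℕ} (hk : k ≤ p) := pow_mul_eq_neg_mul_geomTail hx hf hfp hk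
  have hμ : μ ≠ 0 := by
    rintro rfl
    refine hv (funext fun i ↦ ?_)
    simpa [hfv, hx] using htail i.2.le
  have hsum : x ^ p * ∑ k ∈ range p, f k = -μ * (p * (RpolyC p).eval x) := by
    rw [← sum_range_geomTail_eq_mul_eval_RpolyC hp, mul_sum, mul_sum]
    exact sum_congr rfl fun k hk ↦ htail (mem_range.1 hk).le
  simpa [sum_range_eq_zero_of_mulVec_eq_smul hp hx h hfv, hμ, hp'] using hsum

theorem mem_spectrum_DmatC_mul_MmatC_iff (hp : p ≠ 0) {x : ℂ} (hx : x ≠ 0) :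
    x ∈ spectrum ℂ (DmatC p * MmatC p) ↔ (RpolyC p).IsRoot x := by
  rw [mem_spectrum_iff_exists_mulVec_eq_smul]
  refine ⟨fun ⟨v, hv, h⟩ ↦ isRoot_RpolyC_of_mulVec_eq_smul hp hx hv h, fun h ↦ ?_⟩
  refine ⟨_, Function.ne_iff.2 ⟨⟨p - 1, by omega⟩, ?_⟩, mulVec_geomTail_eq_smul hp h⟩
  simpa [geomTail_pred x (Nat.pos_of_ne_zero hp)] using pow_ne_zero _ hx

theorem norm_le_of_isRoot_RpolyC (hp : 2 ≤ p) {x : ℂ} (hx : (RpolyC p).IsRoot x) :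
    ‖x‖ ≤ ((p : ℝ) - 1) / p := by
  obtain ⟨n, rfl⟩ : ∃ n, p = n + 1 := ⟨p - 1, by omega⟩
  have hn : (1 : ℝ) ≤ n := by exact_mod_cast (by omega : 1 ≤ n)
  refine norm_le_of_sum_eq_zero_of_le_mul_succ (n := n) (a := fun k ↦ (k + 1) / ((n : ℝ) + 1))
    (div_pos (by push_cast; linarith) (by positivity)) (by positivity) (fun k hk ↦ ?_) ?_
  · have hk : (k : ℝ) + 1 ≤ n := by exact_mod_cast hk
    push_cast
    rw [div_le_iff₀ (by positivity)]
    field_simp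
    nlinarith
  · rw [IsRoot.def, eval_RpolyC] at hx
    push_cast at hx ⊢
    exact hx

end averaging

/-- The eigenvalues of `O = D·M` are exactly `0` together with the roots of
`R`; in particular every eigenvalue has modulus at most `(p-1)/p < 1`. -/
theorem eigenvalues_DM (p : ℕ) (hp : 2 ≤ p) :
    spectrum ℂ (DmatC p * MmatC p) = {0} ∪ { l : ℂ | (RpolyC p).IsRoot l } ∧
    (∀ l : ℂ, l ∈ spectrum ℂ (DmatC p * MmatC p) →
      ‖l‖ ≤ ((p : ℝ) - 1) / p) ∧
    ((p : ℝ) - 1) / p < 1 := by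
  have hp₀ : p ≠ 0 := by omega
  have hp₂ : (2 : ℝ) ≤ p := by exact_mod_cast hp
  have hspec : spectrum ℂ (DmatC p * MmatC p) = {0} ∪ { l : ℂ | (RpolyC p).IsRoot l } := by
    ext l
    rcases eq_or_ne l 0 with rfl | hl
    · simp [zero_mem_spectrum_DmatC_mul_MmatC hp₀]
    · simp [mem_spectrum_DmatC_mul_MmatC_iff hp₀ hl, hl]
  refine ⟨hspec, fun l hl ↦ ?_, ?_⟩
  · rcases hspec ▸ hl with rfl | hl
    · rw [norm_zero]
      exact div_nonneg (by linarith) p.cast_nonneg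
    · exact norm_le_of_isRoot_RpolyC hp hl
  · rw [div_lt_one (by positivity)]
    linarith
end

section
/- In KSPM(p), during an avalanche (the leftmost stabilization sequence from π(k−1)^{↓0} to π(k)), each column is fired at most once. -/
def addGrain (σ : ℕ → ℤ) : ℕ → ℤ := fun i => if i = 0 then σ 0 + 1 else σ i

def stabilizesTo (p : ℕ) (b c : ℕ → ℤ) : Prop :=
  Relation.ReflTransGen (kstep p) b c ∧ stable p c

def fireDelta (p i j : ℕ) : ℤ :=
  (if i + p = j then 1 else 0) + (if i = j + 1 then (p : ℤ) else 0) -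
    (if i = j then (p : ℤ) + 1 else 0)

theorem fires.eq_add_fireDelta {p : ℕ} {b b' : ℕ → ℤ} {i : ℕ} (hp : 0 < p)
    (h : fires p b b' i) : b' = b + fireDelta p i := by
  obtain ⟨-, hi, hip, hprev, hrest⟩ := h
  funext j
  simp only [Pi.add_apply, fireDelta]
  rcases eq_or_ne j i with rfl | hji
  · rw [hi, if_neg (by omega), if_neg (by omega), if_pos rfl]
    ring
  rcases eq_or_ne j (i + p) with rfl | hjp
  · rw [hip, if_pos rfl, if_neg (by omega), if_neg (by omega)]
    ring
  by_cases hij : i = j + 1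
  · subst hij
    simpa [hjp.symm] using hprev (by omega)
  · rw [hrest j hji hjp (by omega)]
    simp [hjp.symm, hij, hji.symm]

theorem eq_add_sum_fireDelta_of_fires {p n : ℕ} (hp : 0 < p) {f : Fin (n + 1) → ℕ → ℤ}
    {s : Fin n → ℕ} (hstep : ∀ m : Fin n, fires p (f m.castSucc) (f m.succ) (s m))
    (t : Fin (n + 1)) :
    f t = f 0 + ∑ m with m.castSucc < t, fireDelta p (s m) := by
  induction t using Fin.induction with
  | zero => simp
  | succ m ih =>
    have hfilter : Finset.univ.filter (fun m' : Fin n => m'.castSucc < m.succ) =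
        insert m (Finset.univ.filter fun m' => m'.castSucc < m.castSucc) := by
      ext m'
      simp only [Finset.mem_filter, Finset.mem_univ, true_and, Finset.mem_insert,
        Fin.lt_def, Fin.val_castSucc, Fin.val_succ, Fin.ext_iff]
      omega
    rw [hfilter, Finset.sum_insert (by simp), (hstep m).eq_add_fireDelta hp, ih]
    abel

theorem sum_ite_add_eq_add_ite_eq_zero_le_one {p : ℕ} (hp : 0 < p) (S : Finset ℕ) (j : ℕ) :
    (∑ i ∈ S, if i + p = j then (1 : ℤ) else 0) + (if j = 0 then 1 else 0) ≤ 1 := by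
  rw [Finset.sum_boole]
  split_ifs with hj
  · have hempty : ({i ∈ S | i + p = j} : Finset ℕ) = ∅ := by
      ext i
      simp only [Finset.mem_filter, Finset.notMem_empty, iff_false, not_and]
      omega
    simp [hempty]
  · have hcard : ({i ∈ S | i + p = j} : Finset ℕ).card ≤ 1 :=
      Finset.card_le_one.2 fun a ha b hb => by
        simp only [Finset.mem_filter] at ha hb
        omega
    omega

theorem addGrain_add_sum_fireDelta_le {p : ℕ} (hp : 0 < p) {c : ℕ → ℤ} (hc : stable p c)
    {S : Finset ℕ} {j : ℕ} (hj : j ∈ S) :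
    addGrain c j + ∑ i ∈ S, fireDelta p i j ≤ p := by
  have hsum : ∑ i ∈ S, fireDelta p i j = (∑ i ∈ S, if i + p = j then (1 : ℤ) else 0) +
      (if j + 1 ∈ S then (p : ℤ) else 0) - (p + 1) := by
    simp only [fireDelta, Finset.sum_sub_distrib, Finset.sum_add_distrib, Finset.sum_ite_eq',
      if_pos hj]
  have hgrain : addGrain c j = c j + if j = 0 then 1 else 0 := by
    unfold addGrain
    split_ifs with h <;> simp [h]
  have hright : (if j + 1 ∈ S then (p : ℤ) else 0) ≤ p := by
    split_ifs <;> simp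
  have hleft := sum_ite_add_eq_add_ite_eq_zero_le_one hp S j
  have hcj := hc j
  rw [hsum, hgrain]
  linarith

theorem injOn_of_lt_imp_ne {α β : Type*} [LinearOrder α] {f : α → β} {S : Set α}
    (h : ∀ a ∈ S, ∀ b ∈ S, a < b → f a ≠ f b) : S.InjOn f := by
  intro a ha b hb hab
  by_contra hne
  rcases lt_or_gt_of_ne hne with hlt | hlt
  exacts [h a ha b hb hlt hab, h b hb a ha hlt hab.symm]

theorem injective_of_fires_from_addGrain {p n : ℕ} (hp : 0 < p) {c : ℕ → ℤ} (hc : stable p c)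
    {f : Fin (n + 1) → ℕ → ℤ} {s : Fin n → ℕ} (h0 : f 0 = addGrain c)
    (hstep : ∀ m : Fin n, fires p (f m.castSucc) (f m.succ) (s m)) :
    Function.Injective s := by
  have hfresh : ∀ m₂ : Fin n, ∀ m₁ < m₂, s m₁ ≠ s m₂ := by
    intro m₂
    induction m₂ using WellFoundedLT.induction with
    | _ m₂ ih =>
    intro m₁ hm₁ hs
    set earlier := Finset.univ.filter fun m : Fin n => m.castSucc < m₂.castSucc
    have hmem {m : Fin n} : m ∈ earlier ↔ m < m₂ := by simp [earlier]
    have hinj : Set.InjOn s earlier :=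
      injOn_of_lt_imp_ne fun a _ b hb hab => ih b (hmem.1 hb) a hab
    have hfired : s m₂ ∈ earlier.image s := Finset.mem_image.2 ⟨m₁, hmem.2 hm₁, hs⟩
    have hunstable := (hstep m₂).1
    rw [eq_add_sum_fireDelta_of_fires hp hstep, h0, Pi.add_apply, Finset.sum_apply,
      ← Finset.sum_image (f := fun i => fireDelta p i (s m₂)) hinj] at hunstable
    exact (addGrain_add_sum_fireDelta_le hp hc hfired).not_gt hunstable
  exact Set.injOn_univ.1
    (injOn_of_lt_imp_ne fun a _ b _ hab => hfresh b a hab)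

theorem avalanche_fires_each_column_at_most_once_general
    (p k n : ℕ) (hp : 0 < p)
    (c : ℕ → ℤ) (hc : stabilizesTo p (initial (k - 1)) c)
    (f : Fin (n + 1) → ℕ → ℤ) (s : Fin n → ℕ)
    (h0 : f 0 = addGrain c)
    (hstep : ∀ m : Fin n, fires p (f m.castSucc) (f m.succ) (s m)) :
    Function.Injective s :=
  injective_of_fires_from_addGrain hp hc.2 h0 hstep

/-- During an avalanche (the leftmost stabilization sequence from
`π(k-1)^{↓0}` to `π(k)`), each column is fired at most once. -/
theorem avalanche_fires_each_column_at_most_once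
    (p k n : ℕ) (hp : 0 < p) (hk : 0 < k)
    (c : ℕ → ℤ) (hc : stabilizesTo p (initial (k - 1)) c)
    (f : Fin (n + 1) → ℕ → ℤ) (s : Fin n → ℕ)
    (h0 : f 0 = addGrain c)
    (hstep : ∀ m : Fin n, fires p (f m.castSucc) (f m.succ) (s m))
    (hleftmost : ∀ m : Fin n, ∀ i : ℕ, (p : ℤ) < f m.castSucc i → s m ≤ i)
    (hlast : stable p (f (Fin.last n))) :
    Function.Injective s :=
  avalanche_fires_each_column_at_most_once_general p k n hp c hc f s h0 hstep
end
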